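/- Let k ≥ 1 and let α > 0 and t be real numbers such that α + t > 0. Then γ + (ln k − γ)/k + ψ(α+t) − ψ_k(α+t) ≥ 0. -/

import Mathlib

open Real

/-- The digamma (psi) function: logarithmic derivative of the Gamma function. -/
noncomputable def psi (t : ℝ) : ℝ := deriv Real.Gamma t / Real.Gamma t

/-- The k-digamma function, defined via its series representation
`ψ_k(t) = (ln k − γ)/k − 1/t + ∑_{n=1}^∞ t/(nk(nk+t))`. -/
noncomputable def psik (k t : ℝ) : ℝ :=
  (Real.log k - eulerMascheroniConstant) / k - 1 / t +
    ∑' n : ℕ, t / (((n : ℝ) + 1) * k * (((n : ℝ) + 1) * k + t))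


/-!
Since `log ∘ Γ` is convex with `log Γ(y + 1) = log Γ(y) + log y`, its slope on `[x + N, x + N + 1]`
bounds `ψ(x + N + 1) = ψ(x) + ∑_{j ≤ N} 1/(x + j)` from below by `log (x + N) ≥ log N`.
Rearranged, the partial sums of `∑ x/(n(n + x))` are at most `ψ(x) + 1/x + (H_N - log N)`, and
`H_N - log N → γ` gives `ψ₁ ≤ ψ`. Finally the terms `x/(nk(nk + x))` decrease in `k`.
-/

open Filter Topology Finset

noncomputable def psikTerm (k x : ℝ) (n : ℕ) : ℝ :=
  x / (((n : ℝ) + 1) * k * (((n : ℝ) + 1) * k + x))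

section psikTerm

variable {k k' x : ℝ}

lemma psikTerm_nonneg (hk : 0 ≤ k) (hx : 0 ≤ x) (n : ℕ) : 0 ≤ psikTerm k x n := by
  unfold psikTerm; positivity

lemma psikTerm_le_of_le (hk : 0 < k) (hkk' : k ≤ k') (hx : 0 ≤ x) (n : ℕ) :
    psikTerm k' x n ≤ psikTerm k x n := by
  have hk' : 0 < k' := hk.trans_le hkk'
  have hnk : (n + 1) * k ≤ (n + 1) * k' := by gcongr
  unfold psikTerm
  gcongr

lemma psikTerm_le_inv_sq (hk : 0 < k) (hx : 0 ≤ x) (n : ℕ) :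
    psikTerm k x n ≤ x / k ^ 2 * (1 / ((n : ℝ) + 1) ^ 2) := by
  rw [div_mul_div_comm, mul_one, ← mul_pow, mul_comm k]
  unfold psikTerm
  rw [sq]
  gcongr
  exact le_add_of_nonneg_right hx

lemma summable_psikTerm (hk : 0 < k) (hx : 0 ≤ x) : Summable (psikTerm k x) := by
  have h : Summable fun n : ℕ => 1 / ((n : ℝ) + 1) ^ 2 := by
    simpa using (summable_nat_add_iff 1).mpr (summable_one_div_nat_pow.mpr one_lt_two)
  exact .of_nonneg_of_le (psikTerm_nonneg hk.le hx) (psikTerm_le_inv_sq hk hx) (h.mul_left _)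

lemma tsum_psikTerm_le_of_le (hk : 0 < k) (hkk' : k ≤ k') (hx : 0 ≤ x) :
    ∑' n, psikTerm k' x n ≤ ∑' n, psikTerm k x n :=
  (summable_psikTerm (hk.trans_le hkk') hx).tsum_le_tsum (psikTerm_le_of_le hk hkk' hx)
    (summable_psikTerm hk hx)

lemma psik_eq (k x : ℝ) :
    psik k x = (log k - eulerMascheroniConstant) / k - 1 / x + ∑' n, psikTerm k x n := rfl

lemma psikTerm_one (hx : 0 ≤ x) (n : ℕ) :
    psikTerm 1 x n = 1 / ((n : ℝ) + 1) - 1 / (x + (n + 1)) := by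
  have hn : (0 : ℝ) < n + 1 := by positivity
  have hxn : (0 : ℝ) < x + (n + 1) := by positivity
  unfold psikTerm
  field_simp
  ring

lemma sum_range_psikTerm_one (hx : 0 ≤ x) (N : ℕ) :
    ∑ j ∈ range N, psikTerm 1 x j = harmonic N - ∑ j ∈ range N, 1 / (x + (j + 1)) := by
  simp only [psikTerm_one hx, sum_sub_distrib, harmonic]
  push_cast
  simp only [one_div]

end psikTerm

section psi

variable {x : ℝ}

lemma hasDerivAt_log_Gamma (hx : 0 < x) : HasDerivAt (fun y => log (Gamma y)) (psi x) x := by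
  have hΓ : DifferentiableAt ℝ Gamma x :=
    differentiableAt_Gamma fun m => ((neg_nonpos.mpr m.cast_nonneg).trans_lt hx).ne'
  exact hΓ.hasDerivAt.log (Gamma_pos_of_pos hx).ne'

lemma psi_add_one (hx : 0 < x) : psi (x + 1) = psi x + 1 / x := by
  have hshift : HasDerivAt (fun y => log (Gamma (y + 1))) (psi (x + 1)) x :=
    (hasDerivAt_log_Gamma (by linarith)).comp_add_const x 1
  have hrec : (fun y => log (Gamma (y + 1))) =ᶠ[𝓝 x] fun y => log (Gamma y) + log y := by
    filter_upwards [eventually_gt_nhds hx] with y hy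
    rw [Gamma_add_one hy.ne', log_mul hy.ne' (Gamma_pos_of_pos hy).ne', add_comm]
  have hsum : HasDerivAt (fun y => log (Gamma y) + log y) (psi x + x⁻¹) x :=
    (hasDerivAt_log_Gamma hx).add (hasDerivAt_log hx.ne')
  rw [one_div]
  exact hshift.unique (hsum.congr_of_eventuallyEq hrec)

lemma psi_add_nat (hx : 0 < x) (N : ℕ) :
    psi (x + N) = psi x + ∑ j ∈ range N, 1 / (x + j) := by
  induction N with
  | zero => simp
  | succ N ih =>
    rw [Nat.cast_succ, ← add_assoc, psi_add_one (by positivity), ih, sum_range_succ, add_assoc]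

lemma log_le_psi_add_one (hx : 0 < x) : log x ≤ psi (x + 1) := by
  have hslope := convexOn_log_Gamma.slope_le_deriv (Set.mem_Ioi.mpr hx)
    (Set.mem_Ioi.mpr (by linarith : 0 < x + 1)) (lt_add_one x)
    (hasDerivAt_log_Gamma (by linarith)).differentiableAt
  rwa [slope_def_field, add_sub_cancel_left, div_one, Function.comp_apply, Function.comp_apply,
    Gamma_add_one hx.ne', log_mul hx.ne' (Gamma_pos_of_pos hx).ne', add_sub_cancel_right,
    show log ∘ Gamma = fun y => log (Gamma y) from rfl, (hasDerivAt_log_Gamma (by linarith)).deriv]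
    at hslope

lemma sum_range_psikTerm_one_le (hx : 0 < x) {N : ℕ} (hN : 0 < N) :
    ∑ j ∈ range N, psikTerm 1 x j ≤ psi x + 1 / x + (harmonic N - log N) := by
  have hlog : log N ≤ log (x + N) := log_le_log (by exact_mod_cast hN) (by linarith)
  have hpsi : psi (x + N + 1) = psi x + 1 / x + ∑ j ∈ range N, 1 / (x + (j + 1)) := by
    rw [show x + N + 1 = x + ((N + 1 : ℕ) : ℝ) by push_cast; ring, psi_add_nat hx,
      sum_range_succ']
    push_cast
    ring
  have := log_le_psi_add_one (by positivity : 0 < x + N)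
  rw [sum_range_psikTerm_one hx.le]
  linarith

lemma psik_one_le_psi (hx : 0 < x) : psik 1 x ≤ psi x := by
  have hlim : Tendsto (fun N : ℕ => ∑ j ∈ range N, psikTerm 1 x j - (harmonic N - log N))
      atTop (𝓝 (∑' n, psikTerm 1 x n - eulerMascheroniConstant)) :=
    (summable_psikTerm one_pos hx.le).hasSum.tendsto_sum_nat.sub tendsto_harmonic_sub_log
  have hbound : ∑' n, psikTerm 1 x n - eulerMascheroniConstant ≤ psi x + 1 / x :=
    le_of_tendsto hlim <| (eventually_gt_atTop 0).mono fun N hN => by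
      linarith [sum_range_psikTerm_one_le hx hN]
  rw [psik_eq, log_one, div_one, zero_sub]
  linarith

end psi

theorem psi_psik_lemma_general (k : ℝ) (hk : 1 ≤ k) (α t : ℝ)
    (hαt : 0 < α + t) :
    eulerMascheroniConstant + (Real.log k - eulerMascheroniConstant) / k +
      psi (α + t) - psik k (α + t) ≥ 0 := by
  have hpsi := psik_one_le_psi hαt
  have hseries := tsum_psikTerm_le_of_le one_pos hk hαt.le
  rw [psik_eq] at hpsi ⊢
  rw [log_one, div_one, zero_sub] at hpsi
  linarith

theorem psi_psik_lemma (k : ℝ) (hk : 1 ≤ k) (α t : ℝ) (hα : 0 < α)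
    (hαt : 0 < α + t) :
    eulerMascheroniConstant + (Real.log k - eulerMascheroniConstant) / k +
      psi (α + t) - psik k (α + t) ≥ 0 :=
  psi_psik_lemma_general k hk α t hαt
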